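/- arXiv:1512.07522 — 2 statements merged into one kernel-verified Lean document; each statement's English description precedes it below -/
import Mathlib

section
/- For every z ∈ [0,∞)^d, the recursive max-linear values x on 𝒟 satisfy x_i = max( max_{k ∈ an(i)} (b_{ki}/b_{kk}) x_k , b_{ii} z_i ) for every i ∈ V; that is, the model is also a recursive max-linear model on the transitive closure 𝒟^tc of 𝒟 (the DAG on V with an edge j → i if and only if j ∈ an(i)) with weights c_{ki} = b_{ki}/b_{kk} and c_{ii} = b_{ii}. -/
/-!
Every edge `k → i` is itself a path, so `c k i ≤ b k i / b k k`, and the recursion shows the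
first formula is bounded by the second. Conversely, unrolling `c k i * x k ≤ x i` along a
max-weighted path from `k` to `i` gives `(b k i / b k k) * x k ≤ x i`, since that path has
edge-weight product exactly `b k i / b k k`.
-/

open scoped NNReal ENNReal Classical

namespace MaxLinearDAG

variable {d : ℕ}

/-- `p` is a directed path (with at least one edge) from `j` to `i` in the edge relation `E`. -/
def PathFrom (E : Fin d → Fin d → Prop) (j i : Fin d) (p : List (Fin d)) : Prop :=
  2 ≤ p.length ∧ p.head? = some j ∧ p.getLast? = some i ∧ List.Chain' E p

/-- The directed graph given by `E` is acyclic: no directed path from a node to itself. -/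
def Acyclic (E : Fin d → Fin d → Prop) : Prop :=
  ∀ i, ¬ ∃ p, PathFrom E i i p

/-- `j` is an ancestor of `i`: there is a path from `j` to `i`. -/
def anc (E : Fin d → Fin d → Prop) (j i : Fin d) : Prop :=
  ∃ p, PathFrom E j i p

/-- The weight of a path `p` starting at `j`: `c j j` times the product of the
edge weights along `p`. -/
noncomputable def pathWeight (c : Fin d → Fin d → ℝ≥0) (j : Fin d) (p : List (Fin d)) : ℝ≥0 :=
  c j j * ((p.zip p.tail).map fun q => c q.1 q.2).prod

/-- `b` is the max-linear coefficient matrix of the recursive ML model on `(E, c)`: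
for `j ∈ an(i)`, `b j i` is the (attained) maximum of the path weights over all paths
from `j` to `i`; `b i i = c i i`; and `b j i = 0` for `j ∉ An(i)`. -/
def IsMLMatrix (E : Fin d → Fin d → Prop) (c b : Fin d → Fin d → ℝ≥0) : Prop :=
  (∀ i, b i i = c i i) ∧
  (∀ j i, j ≠ i → ¬ anc E j i → b j i = 0) ∧
  (∀ j i p, PathFrom E j i p → pathWeight c j p ≤ b j i) ∧
  (∀ j i, anc E j i → ∃ p, PathFrom E j i p ∧ pathWeight c j p = b j i)

/-- `x` is the vector of recursive max-linear values on `(E, c)` for noise `z`: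
`x i = max (max_{k ∈ pa(i)} c k i * x k) (c i i * z i)`, empty max being `0`. -/
def IsRecML (E : Fin d → Fin d → Prop) (c : Fin d → Fin d → ℝ≥0) (z x : Fin d → ℝ≥0) : Prop :=
  ∀ i, x i = (Finset.univ.sup fun k => if E k i then c k i * x k else 0) ⊔ c i i * z i

/-- Max-times matrix product `F ⊙ G`. -/
noncomputable def mprod (F G : Fin d → Fin d → ℝ≥0) : Fin d → Fin d → ℝ≥0 :=
  fun i j => Finset.univ.sup fun k => F i k * G k j

/-- Max-times matrix power, `mpow A 0` being the identity matrix. -/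
noncomputable def mpow (A : Fin d → Fin d → ℝ≥0) : ℕ → Fin d → Fin d → ℝ≥0
  | 0 => fun i j => if i = j then 1 else 0
  | n + 1 => mprod (mpow A n) A

/-- `p` is a max-weighted path from `j` to `i`. -/
def MaxWeighted (E : Fin d → Fin d → Prop) (c b : Fin d → Fin d → ℝ≥0)
    (j i : Fin d) (p : List (Fin d)) : Prop :=
  PathFrom E j i p ∧ pathWeight c j p = b j i

/-- The lowest max-weighted ancestors of `i` in `U`: nodes `j ∈ An(i) ∩ U` such that no
max-weighted path from `j` to `i` passes through a node of `U \ {j}`. -/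
def AnLow (E : Fin d → Fin d → Prop) (c b : Fin d → Fin d → ℝ≥0)
    (U : Set (Fin d)) (i : Fin d) : Set (Fin d) :=
  {j | (anc E j i ∨ j = i) ∧ j ∈ U ∧
    ∀ p, MaxWeighted E c b j i p → ¬ ∃ u ∈ U \ {j}, u ∈ p}

/-- The highest max-weighted descendants of `i` in `U`: nodes `l ∈ De(i) ∩ U` such that no
max-weighted path from `i` to `l` passes through a node of `U \ {l}`. -/
def DeHigh (E : Fin d → Fin d → Prop) (c b : Fin d → Fin d → ℝ≥0)
    (U : Set (Fin d)) (i : Fin d) : Set (Fin d) :=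
  {l | (anc E i l ∨ l = i) ∧ l ∈ U ∧
    ∀ p, MaxWeighted E c b i l p → ¬ ∃ u ∈ U \ {l}, u ∈ p}

noncomputable def edgeProd (c : Fin d → Fin d → ℝ≥0) (p : List (Fin d)) : ℝ≥0 :=
  ((p.zip p.tail).map fun q => c q.1 q.2).prod

@[simp]
lemma edgeProd_cons_cons (c : Fin d → Fin d → ℝ≥0) (a b : Fin d) (t : List (Fin d)) :
    edgeProd c (a :: b :: t) = c a b * edgeProd c (b :: t) := by
  simp [edgeProd, List.zip_cons_cons]

lemma pathWeight_eq_mul_edgeProd (c : Fin d → Fin d → ℝ≥0) (j : Fin d) (p : List (Fin d)) :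
    pathWeight c j p = c j j * edgeProd c p :=
  rfl

lemma pathFrom_pair {E : Fin d → Fin d → Prop} {k i : Fin d} (h : E k i) :
    PathFrom E k i [k, i] :=
  ⟨le_rfl, rfl, rfl, List.isChain_pair.2 h⟩

lemma anc_of_edge {E : Fin d → Fin d → Prop} {k i : Fin d} (h : E k i) : anc E k i :=
  ⟨[k, i], pathFrom_pair h⟩

namespace IsRecML

variable {E : Fin d → Fin d → Prop} {c : Fin d → Fin d → ℝ≥0} {z x : Fin d → ℝ≥0}

lemma mul_noise_le (hx : IsRecML E c z x) (i : Fin d) : c i i * z i ≤ x i :=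
  hx i ▸ le_sup_right

lemma edge_mul_le (hx : IsRecML E c z x) {k i : Fin d} (h : E k i) : c k i * x k ≤ x i := by
  rw [hx i]
  refine le_sup_of_le_left (le_trans (le_of_eq ?_)
    (Finset.le_sup (f := fun k => if E k i then c k i * x k else 0) (Finset.mem_univ k)))
  simp [h]

lemma edgeProd_mul_le_getLast (hx : IsRecML E c z x) :
    ∀ (a : Fin d) (t : List (Fin d)), (a :: t).IsChain E →
      edgeProd c (a :: t) * x a ≤ x ((a :: t).getLast (List.cons_ne_nil a t))
  | a, [], _ => by simp [edgeProd]
  | a, b :: t, hchain => by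
    rw [List.isChain_cons_cons] at hchain
    calc edgeProd c (a :: b :: t) * x a = edgeProd c (b :: t) * (c a b * x a) := by
          rw [edgeProd_cons_cons]; ring
      _ ≤ edgeProd c (b :: t) * x b := by gcongr; exact hx.edge_mul_le hchain.1
      _ ≤ x ((b :: t).getLast (List.cons_ne_nil b t)) :=
          hx.edgeProd_mul_le_getLast b t hchain.2

lemma edgeProd_mul_le (hx : IsRecML E c z x) {j i : Fin d} {p : List (Fin d)}
    (hp : PathFrom E j i p) : edgeProd c p * x j ≤ x i := by
  obtain ⟨-, hhead, hlast, hchain⟩ := hp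
  cases p with
  | nil => simp at hhead
  | cons a t => ?_
  obtain rfl : a = j := by simpa using hhead
  rw [List.getLast?_eq_some_getLast (List.cons_ne_nil a t), Option.some_inj] at hlast
  exact hlast ▸ hx.edgeProd_mul_le_getLast a t hchain

end IsRecML

namespace IsMLMatrix

variable {E : Fin d → Fin d → Prop} {c b : Fin d → Fin d → ℝ≥0}

lemma edge_le_div_diag (hb : IsMLMatrix E c b) (hcd : ∀ i, 0 < c i i) {k i : Fin d}
    (h : E k i) : c k i ≤ b k i / b k k := by
  rw [hb.1 k, le_div_iff₀ (hcd k)]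
  calc c k i * c k k = pathWeight c k [k, i] := by
        simp [pathWeight_eq_mul_edgeProd, edgeProd, mul_comm]
    _ ≤ b k i := hb.2.2.1 k i _ (pathFrom_pair h)

lemma exists_div_diag_eq_edgeProd (hb : IsMLMatrix E c b) (hcd : ∀ i, 0 < c i i)
    {k i : Fin d} (h : anc E k i) : ∃ p, PathFrom E k i p ∧ b k i / b k k = edgeProd c p := by
  obtain ⟨p, hp, hpw⟩ := hb.2.2.2 k i h
  refine ⟨p, hp, ?_⟩
  rw [← hpw, hb.1 k, pathWeight_eq_mul_edgeProd, mul_div_cancel_left₀ _ (hcd k).ne']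

end IsMLMatrix

lemma IsRecML.div_diag_mul_le {E : Fin d → Fin d → Prop} {c b : Fin d → Fin d → ℝ≥0}
    {z x : Fin d → ℝ≥0} (hx : IsRecML E c z x) (hb : IsMLMatrix E c b) (hcd : ∀ i, 0 < c i i)
    {k i : Fin d} (h : anc E k i) : b k i / b k k * x k ≤ x i := by
  obtain ⟨p, hp, hdiv⟩ := hb.exists_div_diag_eq_edgeProd hcd h
  exact hdiv ▸ hx.edgeProd_mul_le hp

theorem stmt13_general {d : ℕ} (E : Fin d → Fin d → Prop)
    (c : Fin d → Fin d → ℝ≥0) (hcd : ∀ i, 0 < c i i)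
    (b : Fin d → Fin d → ℝ≥0) (hb : IsMLMatrix E c b)
    (z x : Fin d → ℝ≥0) (hx : IsRecML E c z x) :
    ∀ i, x i =
      (Finset.univ.sup fun k => if anc E k i then (b k i / b k k) * x k else 0) ⊔
        b i i * z i := by
  intro i
  apply le_antisymm
  · rw [hx i, hb.1 i]
    refine sup_le_sup_right (Finset.sup_mono_fun fun k _ => ?_) _
    by_cases hk : E k i
    · simp only [hk, anc_of_edge hk, if_true]
      gcongr
      exact hb.edge_le_div_diag hcd hk
    · simp [hk]
  · refine sup_le (Finset.sup_le fun k _ => ?_) (hb.1 i ▸ hx.mul_noise_le i)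
    split_ifs with hk
    · exact hx.div_diag_mul_le hb hcd hk
    · exact zero_le

/-- For every `z`, the recursive max-linear values `x` on `𝒟` satisfy
`x i = max (max_{k ∈ an(i)} (b k i / b k k) * x k) (b i i * z i)` for every `i`; that is,
the model is also a recursive max-linear model on the transitive closure of `𝒟` with
weights `c k i = b k i / b k k` and `c i i = b i i`. -/
theorem stmt13 {d : ℕ} (hd : 1 ≤ d) (E : Fin d → Fin d → Prop) (hE : Acyclic E)
    (c : Fin d → Fin d → ℝ≥0) (hcd : ∀ i, 0 < c i i) (hce : ∀ k i, E k i → 0 < c k i)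
    (b : Fin d → Fin d → ℝ≥0) (hb : IsMLMatrix E c b)
    (z x : Fin d → ℝ≥0) (hx : IsRecML E c z x) :
    ∀ i, x i =
      (Finset.univ.sup fun k => if anc E k i then (b k i / b k k) * x k else 0) ⊔
        b i i * z i :=
  stmt13_general E c hcd b hb z x hx
end MaxLinearDAG
end

section
/- Let U ⊆ V and i ∈ V, and let x be the recursive max-linear values on 𝒟 for any z ∈ [0,∞)^d. Then max_{j ∈ An(i)∩U} (b_{ji}/b_{jj}) x_j = max_{j ∈ An_low^U(i)} (b_{ji}/b_{jj}) x_j, and min_{l ∈ De(i)∩U} (b_{ii}/b_{il}) x_l = min_{l ∈ De_high^U(i)} (b_{ii}/b_{il}) x_l, where the maximum over the empty set is 0 and the minimum over the empty set is +∞. -/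
open scoped NNReal ENNReal Classical

namespace MaxLinearDAG

variable {d : ℕ}

/-! If a max-weighted path from `j` to `i` passes through `u`, its weight splits as
`b j i = c j j * w₁ * w₂`, with `w₁`, `w₂` the edge-weight products of its pieces `j → u` and
`u → i`. The recursive ML equations give `w₁ * x j ≤ x u`, and `c u u * w₂ ≤ b u i`. Hence the
ratio `(b j i / b j j) * x j` can only grow when `j` is replaced by a node `u ∈ U` on such a path,
and dually `(b i i / b i l) * x l` can only shrink. Each replacement moves strictly down (resp.
up) the DAG, so it terminates at a lowest max-weighted ancestor (resp. highest max-weighted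
descendant), which therefore attains the extremum. -/

section Descent

variable {α β : Type*}

theorem _root_.WellFounded.exists_le_of_step [Preorder β] {r : α → α → Prop} (hr : WellFounded r)
    {S T : α → Prop} (f : α → β) (hstep : ∀ a, S a → ¬ T a → ∃ u, r u a ∧ S u ∧ f a ≤ f u) :
    ∀ a, S a → ∃ a', T a' ∧ f a ≤ f a' := by
  intro a
  induction a using hr.induction with
  | _ a ih =>
    intro ha
    by_cases hTa : T a
    · exact ⟨a, hTa, le_rfl⟩
    · obtain ⟨u, hua, hSu, hau⟩ := hstep a ha hTa
      obtain ⟨a', hTa', hua'⟩ := ih u hua hSu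
      exact ⟨a', hTa', hau.trans hua'⟩

theorem _root_.Finset.sup_ite_eq_of_forall_exists_le [Fintype α] [SemilatticeSup β] [OrderBot β]
    {S T : α → Prop} [DecidablePred S] [DecidablePred T] (f : α → β) (hTS : ∀ a, T a → S a)
    (h : ∀ a, S a → ∃ a', T a' ∧ f a ≤ f a') :
    (Finset.univ.sup fun a => if S a then f a else ⊥) =
      Finset.univ.sup fun a => if T a then f a else ⊥ := by
  apply le_antisymm <;> refine Finset.sup_le fun a _ => ?_ <;> split_ifs with ha
  · obtain ⟨a', hTa', hle⟩ := h a ha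
    exact Finset.le_sup_of_le (Finset.mem_univ a') (by rwa [if_pos hTa'])
  · exact bot_le
  · exact Finset.le_sup_of_le (Finset.mem_univ a) (by rw [if_pos (hTS a ha)])
  · exact bot_le

theorem _root_.Finset.inf_ite_eq_of_forall_exists_le [Fintype α] [SemilatticeInf β] [OrderTop β]
    {S T : α → Prop} [DecidablePred S] [DecidablePred T] (f : α → β) (hTS : ∀ a, T a → S a)
    (h : ∀ a, S a → ∃ a', T a' ∧ f a' ≤ f a) :
    (Finset.univ.inf fun a => if S a then f a else ⊤) =
      Finset.univ.inf fun a => if T a then f a else ⊤ :=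
  Finset.sup_ite_eq_of_forall_exists_le (β := βᵒᵈ) f hTS h

end Descent

variable {E : Fin d → Fin d → Prop} {c b : Fin d → Fin d → ℝ≥0} {z x : Fin d → ℝ≥0}
  {i j k l u : Fin d} {p s t : List (Fin d)}

def WalkFrom (E : Fin d → Fin d → Prop) (j i : Fin d) (p : List (Fin d)) : Prop :=
  p.head? = some j ∧ p.getLast? = some i ∧ p.IsChain E

theorem PathFrom.walkFrom (h : PathFrom E j i p) : WalkFrom E j i p := h.2

theorem walkFrom_append_cons :
    WalkFrom E j i (s ++ u :: t) ↔ WalkFrom E j u (s ++ [u]) ∧ WalkFrom E u i (u :: t) := by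
  rw [WalkFrom, WalkFrom, WalkFrom, List.isChain_split]
  simp only [List.head?_append, List.head?_cons, Option.or_some, Option.some.injEq,
    List.getLast?_append, Option.or_eq_some_iff, List.getLast?_eq_none_iff, reduceCtorEq,
    false_and, or_false, List.getLast?_singleton, Option.some_or, true_and]
  tauto

theorem WalkFrom.split_of_mem (h : WalkFrom E j i p) (hu : u ∈ p) :
    ∃ s t, p = s ++ u :: t ∧ WalkFrom E j u (s ++ [u]) ∧ WalkFrom E u i (u :: t) := by
  obtain ⟨s, t, rfl⟩ := List.append_of_mem hu
  exact ⟨s, t, rfl, walkFrom_append_cons.mp h⟩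

theorem WalkFrom.pathFrom (h : WalkFrom E j i p) (hji : j ≠ i) : PathFrom E j i p := by
  refine ⟨?_, h⟩
  match p, h with
  | [], ⟨hj, _⟩ => simp at hj
  | [_], ⟨hj, hi, _⟩ => simp_all
  | _ :: _ :: _, _ => simp

theorem WalkFrom.anc_or_eq (h : WalkFrom E j i p) : anc E j i ∨ j = i :=
  (em (j = i)).symm.imp (fun hji => ⟨p, h.pathFrom hji⟩) id

theorem anc_trans (hjk : anc E j k) (hki : anc E k i) : anc E j i := by
  obtain ⟨p, hp, hpW⟩ := hjk
  obtain ⟨q, hq, hqW⟩ := hki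
  obtain ⟨s, rfl⟩ := List.getLast?_eq_some_iff.mp hpW.2.1
  obtain ⟨t, rfl⟩ := List.head?_eq_some_iff.mp hqW.1
  refine ⟨s ++ k :: t, ?_, walkFrom_append_cons.mpr ⟨hpW, hqW⟩⟩
  simp only [List.length_append, List.length_cons, List.length_nil] at hp hq ⊢
  omega

theorem Acyclic.wellFounded_anc (hE : Acyclic E) : WellFounded (anc E) :=
  have : IsTrans (Fin d) (anc E) := ⟨fun _ _ _ => anc_trans⟩
  have : Std.Irrefl (anc E) := ⟨hE⟩
  Finite.wellFounded_of_trans_of_irrefl _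

theorem Acyclic.wellFounded_swap_anc (hE : Acyclic E) : WellFounded (Function.swap (anc E)) :=
  have : IsTrans (Fin d) (anc E) := ⟨fun _ _ _ => anc_trans⟩
  have : Std.Irrefl (Function.swap (anc E)) := ⟨hE⟩
  Finite.wellFounded_of_trans_of_irrefl _

noncomputable def edgeWeight (c : Fin d → Fin d → ℝ≥0) (p : List (Fin d)) : ℝ≥0 :=
  ((p.zip p.tail).map fun q => c q.1 q.2).prod

theorem pathWeight_eq_mul_edgeWeight (c : Fin d → Fin d → ℝ≥0) (j : Fin d) (p : List (Fin d)) :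
    pathWeight c j p = c j j * edgeWeight c p := rfl

@[simp]
theorem edgeWeight_singleton (c : Fin d → Fin d → ℝ≥0) (a : Fin d) : edgeWeight c [a] = 1 := by
  simp [edgeWeight]

@[simp]
theorem edgeWeight_cons_cons (c : Fin d → Fin d → ℝ≥0) (a a' : Fin d) (t : List (Fin d)) :
    edgeWeight c (a :: a' :: t) = c a a' * edgeWeight c (a' :: t) := by
  simp [edgeWeight]

theorem edgeWeight_append_cons (c : Fin d → Fin d → ℝ≥0) :
    ∀ (s : List (Fin d)) (u : Fin d) (t : List (Fin d)),
      edgeWeight c (s ++ u :: t) = edgeWeight c (s ++ [u]) * edgeWeight c (u :: t)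
  | [], _, _ => by simp
  | [_], _, _ => by simp
  | a :: a' :: s, u, t => by
    have ih := edgeWeight_append_cons c (a' :: s) u t
    simp only [List.cons_append] at ih ⊢
    rw [edgeWeight_cons_cons, edgeWeight_cons_cons, ih, mul_assoc]

theorem edgeWeight_pos (hce : ∀ k i, E k i → 0 < c k i) :
    ∀ {p : List (Fin d)}, p.IsChain E → 0 < edgeWeight c p
  | [], _ => by simp [edgeWeight]
  | [_], _ => by simp
  | _ :: _ :: _, h => by
    rw [List.isChain_cons_cons] at h
    rw [edgeWeight_cons_cons]
    exact mul_pos (hce _ _ h.1) (edgeWeight_pos hce h.2)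

theorem IsRecML.mul_le_of_edge (hx : IsRecML E c z x) (h : E k i) : c k i * x k ≤ x i := by
  rw [hx i]
  refine le_sup_of_le_left ?_
  convert Finset.le_sup (f := fun k => if E k i then c k i * x k else 0) (Finset.mem_univ k)
  exact (if_pos h).symm

theorem IsRecML.edgeWeight_mul_le (hx : IsRecML E c z x) :
    ∀ {j : Fin d} {p : List (Fin d)}, WalkFrom E j i p → edgeWeight c p * x j ≤ x i
  | _, [], ⟨hj, _⟩ => by simp at hj
  | _, [_], ⟨hj, hi, _⟩ => by simp_all
  | _, a :: a' :: t, ⟨hj, hi, hc⟩ => by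
    obtain rfl : a = _ := by simpa using hj
    rw [List.isChain_cons_cons] at hc
    calc edgeWeight c (a :: a' :: t) * x a = edgeWeight c (a' :: t) * (c a a' * x a) := by
          rw [edgeWeight_cons_cons]; ring
      _ ≤ edgeWeight c (a' :: t) * x a' := by gcongr; exact hx.mul_le_of_edge hc.1
      _ ≤ x i := hx.edgeWeight_mul_le ⟨rfl, by simpa using hi, hc.2⟩

theorem IsMLMatrix.weight_le (hb : IsMLMatrix E c b) (h : WalkFrom E j i p) :
    c j j * edgeWeight c p ≤ b j i := by
  by_cases hji : j = i
  · subst hji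
    match p, h with
    | [], ⟨hj, _⟩ => simp at hj
    | [_], ⟨hj, _, _⟩ => simp_all [hb.1]
    | _ :: _ :: _, h => exact hb.2.2.1 _ _ _ ⟨by simp, h⟩
  · exact hb.2.2.1 _ _ _ (h.pathFrom hji)

theorem MaxWeighted.div_diag_mul_le_of_mem (hcd : ∀ i, 0 < c i i) (hb : IsMLMatrix E c b)
    (hx : IsRecML E c z x) (hp : MaxWeighted E c b j i p) (hu : u ∈ p) :
    b j i / b j j * x j ≤ b u i / b u u * x u := by
  obtain ⟨s, t, rfl, h₁, h₂⟩ := hp.1.walkFrom.split_of_mem hu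
  have hratio : b j i / b j j = edgeWeight c (s ++ [u]) * edgeWeight c (u :: t) := by
    rw [hb.1, ← hp.2, pathWeight_eq_mul_edgeWeight, edgeWeight_append_cons,
      mul_div_cancel_left₀ _ (hcd j).ne']
  have hweight : edgeWeight c (u :: t) ≤ b u i / b u u := by
    rw [hb.1, le_div_iff₀ (hcd u), mul_comm]
    exact hb.weight_le h₂
  calc b j i / b j j * x j = edgeWeight c (u :: t) * (edgeWeight c (s ++ [u]) * x j) := by
        rw [hratio]; ring
    _ ≤ b u i / b u u * x u := mul_le_mul' hweight (hx.edgeWeight_mul_le h₁)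

theorem MaxWeighted.diag_div_mul_le_of_mem (hcd : ∀ i, 0 < c i i)
    (hce : ∀ k i, E k i → 0 < c k i) (hb : IsMLMatrix E c b) (hx : IsRecML E c z x)
    (hp : MaxWeighted E c b i l p) (hu : u ∈ p) :
    b i i / b i u * x u ≤ b i i / b i l * x l := by
  obtain ⟨s, t, rfl, h₁, h₂⟩ := hp.1.walkFrom.split_of_mem hu
  have hw₁ : 0 < c i i * edgeWeight c (s ++ [u]) := mul_pos (hcd i) (edgeWeight_pos hce h₁.2.2)
  have hw₂ : 0 < edgeWeight c (u :: t) := edgeWeight_pos hce h₂.2.2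
  have hbil : b i l = c i i * edgeWeight c (s ++ [u]) * edgeWeight c (u :: t) := by
    rw [← hp.2, pathWeight_eq_mul_edgeWeight, edgeWeight_append_cons, mul_assoc]
  calc b i i / b i u * x u ≤ b i i / (c i i * edgeWeight c (s ++ [u])) * x u := by
        gcongr
        exact hb.weight_le h₁
    _ = b i i / b i l * (edgeWeight c (u :: t) * x u) := by
        rw [hbil]; field_simp
    _ ≤ b i i / b i l * x l := by
        gcongr
        exact hx.edgeWeight_mul_le h₂

theorem sup_anc_eq_sup_anLow (hE : Acyclic E) (hcd : ∀ i, 0 < c i i) (hb : IsMLMatrix E c b)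
    (U : Set (Fin d)) (i : Fin d) (hx : IsRecML E c z x) :
    (Finset.univ.sup fun j =>
        if (anc E j i ∨ j = i) ∧ j ∈ U then (b j i / b j j) * x j else 0) =
      Finset.univ.sup fun j => if j ∈ AnLow E c b U i then (b j i / b j j) * x j else 0 := by
  refine Finset.sup_ite_eq_of_forall_exists_le _ (fun j hj => ⟨hj.1, hj.2.1⟩)
    (hE.wellFounded_swap_anc.exists_le_of_step _ fun j ⟨hji, hjU⟩ hj => ?_)
  simp only [AnLow, Set.mem_ofPred_eq, not_and, not_forall, not_not] at hj
  obtain ⟨p, hp, u, ⟨huU, huj⟩, hup⟩ := hj hji hjU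
  obtain ⟨s, t, rfl, h₁, h₂⟩ := hp.1.walkFrom.split_of_mem hup
  exact ⟨u, ⟨_, h₁.pathFrom (Ne.symm huj)⟩, ⟨h₂.anc_or_eq, huU⟩,
    hp.div_diag_mul_le_of_mem hcd hb hx (by simp)⟩

theorem inf_de_eq_inf_deHigh (hE : Acyclic E) (hcd : ∀ i, 0 < c i i)
    (hce : ∀ k i, E k i → 0 < c k i) (hb : IsMLMatrix E c b)
    (U : Set (Fin d)) (i : Fin d) (hx : IsRecML E c z x) :
    (Finset.univ.inf fun l =>
        if (anc E i l ∨ l = i) ∧ l ∈ U then (((b i i / b i l) * x l : ℝ≥0) : ℝ≥0∞) else ⊤) =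
      Finset.univ.inf fun l =>
        if l ∈ DeHigh E c b U i then (((b i i / b i l) * x l : ℝ≥0) : ℝ≥0∞) else ⊤ := by
  refine Finset.inf_ite_eq_of_forall_exists_le _ (fun l hl => ⟨hl.1, hl.2.1⟩)
    (hE.wellFounded_anc.exists_le_of_step (β := ℝ≥0∞ᵒᵈ) _ fun l ⟨hil, hlU⟩ hl => ?_)
  simp only [DeHigh, Set.mem_ofPred_eq, not_and, not_forall, not_not] at hl
  obtain ⟨p, hp, u, ⟨huU, hul⟩, hup⟩ := hl hil hlU
  obtain ⟨s, t, rfl, h₁, h₂⟩ := hp.1.walkFrom.split_of_mem hup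
  exact ⟨u, ⟨_, h₂.pathFrom hul⟩, ⟨h₁.anc_or_eq.imp_right Eq.symm, huU⟩,
    ENNReal.coe_le_coe.mpr (hp.diag_div_mul_le_of_mem hcd hce hb hx (by simp))⟩

theorem stmt17_general {d : ℕ} (E : Fin d → Fin d → Prop) (hE : Acyclic E)
    (c : Fin d → Fin d → ℝ≥0) (hcd : ∀ i, 0 < c i i) (hce : ∀ k i, E k i → 0 < c k i)
    (b : Fin d → Fin d → ℝ≥0) (hb : IsMLMatrix E c b)
    (U : Set (Fin d)) (i : Fin d) (z x : Fin d → ℝ≥0) (hx : IsRecML E c z x) :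
    ((Finset.univ.sup fun j =>
        if (anc E j i ∨ j = i) ∧ j ∈ U then (b j i / b j j) * x j else 0) =
      Finset.univ.sup fun j =>
        if j ∈ AnLow E c b U i then (b j i / b j j) * x j else 0) ∧
    ((Finset.univ.inf fun l =>
        if (anc E i l ∨ l = i) ∧ l ∈ U then (((b i i / b i l) * x l : ℝ≥0) : ℝ≥0∞)
        else ⊤) =
      Finset.univ.inf fun l =>
        if l ∈ DeHigh E c b U i then (((b i i / b i l) * x l : ℝ≥0) : ℝ≥0∞) else ⊤) :=
  ⟨sup_anc_eq_sup_anLow hE hcd hb U i hx, inf_de_eq_inf_deHigh hE hcd hce hb U i hx⟩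

/-- Let `U ⊆ V`, `i ∈ V`, and `x` the recursive max-linear values on `𝒟` for
any `z`. Then `max_{j ∈ An(i) ∩ U} (b j i / b j j) * x j
= max_{j ∈ An_low^U(i)} (b j i / b j j) * x j` (empty max `0`), and
`min_{l ∈ De(i) ∩ U} (b i i / b i l) * x l = min_{l ∈ De_high^U(i)} (b i i / b i l) * x l`
(empty min `+∞`, taken in `ℝ≥0∞`). -/
theorem stmt17 {d : ℕ} (hd : 1 ≤ d) (E : Fin d → Fin d → Prop) (hE : Acyclic E)
    (c : Fin d → Fin d → ℝ≥0) (hcd : ∀ i, 0 < c i i) (hce : ∀ k i, E k i → 0 < c k i)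
    (b : Fin d → Fin d → ℝ≥0) (hb : IsMLMatrix E c b)
    (U : Set (Fin d)) (i : Fin d) (z x : Fin d → ℝ≥0) (hx : IsRecML E c z x) :
    ((Finset.univ.sup fun j =>
        if (anc E j i ∨ j = i) ∧ j ∈ U then (b j i / b j j) * x j else 0) =
      Finset.univ.sup fun j =>
        if j ∈ AnLow E c b U i then (b j i / b j j) * x j else 0) ∧
    ((Finset.univ.inf fun l =>
        if (anc E i l ∨ l = i) ∧ l ∈ U then (((b i i / b i l) * x l : ℝ≥0) : ℝ≥0∞)
        else ⊤) =
      Finset.univ.inf fun l =>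
        if l ∈ DeHigh E c b U i then (((b i i / b i l) * x l : ℝ≥0) : ℝ≥0∞) else ⊤) :=
  stmt17_general E hE c hcd hce b hb U i z x hx
end MaxLinearDAG
end
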